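/- Let $\mathbb{P}(a_0, \dots, a_n)$ be a weighted projective space with coordinates $x_0, \dots, x_n$ of weights $a_i$, let $\mathsf{p} = (\alpha_0 : \cdots : \alpha_n)$ with $\alpha_i \neq 0$ for a fixed index $i$, and for $j \neq i$ set $m_j = \operatorname{lcm}(a_i, a_j)$ and $g_j = \alpha_i^{m_j/a_i} x_j^{m_j/a_j} - \alpha_j^{m_j/a_j} x_i^{m_j/a_i}$. Then each $g_j$ is a weighted-homogeneous polynomial of degree $m_j$, and the common zero locus of $\{g_j : j \neq i\}$ in $\mathbb{P}(a_0, \dots, a_n)$ intersected with the open set $\{x_i \neq 0\}$ consists of finitely many points and contains $\mathsf{p}$. (In particular, every point $(\beta_0 : \cdots : \beta_n)$ with $\beta_i \neq 0$ in the common zero locus satisfies $\beta_j^{m_j/a_j}/\beta_i^{m_j/a_i} = \alpha_j^{m_j/a_j}/\alpha_i^{m_j/a_i}$ for all $j$, and there are at most $\prod_{j \neq i} (m_j/a_j)$ such points.) -/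

import Mathlib

/-!
Each `g j` is a binomial whose two monomials both have weighted degree `m j`. On the chart
`x i ≠ 0`, rescale a zero `β` of all the `g j` by the weighted `ℂ^*`-action so that its `i`-th
coordinate becomes `α i`; the equations `g j = 0` are invariant under this action, and after the
normalisation they say `γ j ^ (m j / a j) = α j ^ (m j / a j)`. So the normalised point lies in a
product of sets of roots of unity times `α j`, of size at most `∏ j ≠ i, m j / a j`.
-/

open MvPolynomial

namespace Polynomial

theorem card_nthRootsFinset_le {R : Type*} [CommRing R] [IsDomain R] (n : ℕ) (a : R) :
    (nthRootsFinset n a).card ≤ n := by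
  classical
  rw [nthRootsFinset_def]
  exact (Multiset.toFinset_card_le _).trans (card_nthRoots n a)

end Polynomial

theorem Nat.lcm_div_right_pos {a b : ℕ} (ha : 0 < a) (hb : 0 < b) : 0 < Nat.lcm a b / b :=
  Nat.div_pos (Nat.le_of_dvd (Nat.lcm_pos ha hb) (Nat.dvd_lcm_right a b)) hb

theorem MvPolynomial.isWeightedHomogeneous_C_mul_X_pow_sub {σ R : Type*} [CommRing R]
    (w : σ → ℕ) (c c' : R) (j i : σ) {k l d : ℕ} (hk : k * w j = d) (hl : l * w i = d) :
    IsWeightedHomogeneous w (C c * X j ^ k - C c' * X i ^ l) d := by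
  subst hk
  have hXj := ((isWeightedHomogeneous_X R w j).pow k).C_mul c
  have hXi := ((isWeightedHomogeneous_X R w i).pow l).C_mul c'
  rw [smul_eq_mul] at hXj hXi
  exact hXj.sub (hl ▸ hXi)

section RootBox

variable {ι R : Type*} [Fintype ι] [DecidableEq ι] [CommRing R] [IsDomain R]

noncomputable def rootBox (k : ι → ℕ) (α : ι → R) : Finset (ι → R) :=
  Fintype.piFinset fun j => Polynomial.nthRootsFinset (k j) (α j ^ k j)

theorem mem_rootBox {k : ι → ℕ} (hk : ∀ j, 0 < k j) {α γ : ι → R} :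
    γ ∈ rootBox k α ↔ ∀ j, γ j ^ k j = α j ^ k j := by
  simp only [rootBox, Fintype.mem_piFinset, Polynomial.mem_nthRootsFinset (hk _)]

theorem card_rootBox_le (k : ι → ℕ) (α : ι → R) : (rootBox k α).card ≤ ∏ j, k j := by
  rw [rootBox, Fintype.card_piFinset]
  exact Finset.prod_le_prod' fun j _ => Polynomial.card_nthRootsFinset_le _ _

end RootBox

theorem exists_weighted_rescale_eq {ι K : Type*} [Field K] [IsAlgClosed K] (a : ι → ℕ) {i : ι}
    (hai : 0 < a i) {β : ι → K} (hβi : β i ≠ 0) {c : K} (hc : c ≠ 0) :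
    ∃ lam : K, lam ≠ 0 ∧ ∃ γ : ι → K, γ i = c ∧ ∀ k, β k = lam ^ a k * γ k := by
  obtain ⟨lam, hlam⟩ := IsAlgClosed.exists_pow_nat_eq (β i / c) hai
  have hlam0 : lam ≠ 0 := by
    rintro rfl
    rw [zero_pow hai.ne'] at hlam
    exact div_ne_zero hβi hc hlam.symm
  refine ⟨lam, hlam0, fun k => β k / lam ^ a k, ?_, fun k => ?_⟩
  · show β i / lam ^ a i = c
    rw [hlam]
    field_simp
  · field_simp

theorem pow_eq_pow_of_weighted_rescale {K : Type*} [Field K] {lam c x y : K} {p q k l : ℕ}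
    (hlam : lam ≠ 0) (hc : c ≠ 0) (hpq : k * p = l * q)
    (h : (lam ^ p * y) ^ k * c ^ l = x ^ k * (lam ^ q * c) ^ l) : y ^ k = x ^ k := by
  rw [mul_pow, mul_pow, ← pow_mul', ← pow_mul', hpq] at h
  have hne : lam ^ (l * q) * c ^ l ≠ 0 := mul_ne_zero (pow_ne_zero _ hlam) (pow_ne_zero _ hc)
  exact mul_left_cancel₀ hne (by linear_combination h)

theorem stmt_17 (n : ℕ) (a : Fin (n+1) → ℕ) (ha : ∀ j, 0 < a j)
    (i : Fin (n+1)) (α : Fin (n+1) → ℂ) (hαi : α i ≠ 0)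
    (m : Fin (n+1) → ℕ) (hm : ∀ j, m j = Nat.lcm (a i) (a j))
    (g : Fin (n+1) → MvPolynomial (Fin (n+1)) ℂ)
    (hg : ∀ j, g j = C (α i ^ (m j / a i)) * X j ^ (m j / a j)
        - C (α j ^ (m j / a j)) * X i ^ (m j / a i)) :
    (∀ j, IsWeightedHomogeneous a (g j) (m j)) ∧
    (∀ j, j ≠ i → eval α (g j) = 0) ∧
    (∀ β : Fin (n+1) → ℂ, β i ≠ 0 → (∀ j, j ≠ i → eval β (g j) = 0) →
      ∀ j, β j ^ (m j / a j) * α i ^ (m j / a i)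
        = α j ^ (m j / a j) * β i ^ (m j / a i)) ∧
    (∃ S : Finset (Fin (n+1) → ℂ),
      S.card ≤ ∏ j ∈ Finset.univ.erase i, (m j / a j) ∧
      (∀ β : Fin (n+1) → ℂ, β i ≠ 0 → (∀ j, j ≠ i → eval β (g j) = 0) →
        ∃ γ ∈ S, ∃ lam : ℂ, lam ≠ 0 ∧ ∀ k, β k = lam ^ (a k) * γ k) ∧
      (∃ γ ∈ S, ∃ lam : ℂ, lam ≠ 0 ∧ ∀ k, α k = lam ^ (a k) * γ k)) := by
  have hmj : ∀ j, m j / a j * a j = m j := fun j =>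
    Nat.div_mul_cancel (hm j ▸ Nat.dvd_lcm_right _ _)
  have hmi : ∀ j, m j / a i * a i = m j := fun j =>
    Nat.div_mul_cancel (hm j ▸ Nat.dvd_lcm_left _ _)
  have hk : ∀ j, 0 < m j / a j := fun j => hm j ▸ Nat.lcm_div_right_pos (ha i) (ha j)
  have hki : m i / a i = 1 := by rw [hm i, Nat.lcm_self, Nat.div_self (ha i)]
  have eval_g : ∀ β j, eval β (g j) = α i ^ (m j / a i) * β j ^ (m j / a j)
      - α j ^ (m j / a j) * β i ^ (m j / a i) := fun β j => by simp [hg j]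
  have relation : ∀ β : Fin (n+1) → ℂ, (∀ j, j ≠ i → eval β (g j) = 0) →
      ∀ j, β j ^ (m j / a j) * α i ^ (m j / a i) = α j ^ (m j / a j) * β i ^ (m j / a i) := by
    intro β hβ j
    rcases eq_or_ne j i with rfl | hj
    · ring
    · have hgj := hβ j hj
      rw [eval_g] at hgj
      linear_combination hgj
  refine ⟨fun j => hg j ▸ isWeightedHomogeneous_C_mul_X_pow_sub a _ _ j i (hmj j) (hmi j),
    fun j _ => by rw [eval_g]; ring, fun β _ hβ => relation β hβ,
    rootBox (fun j => m j / a j) α, ?_, ?_, α, (mem_rootBox hk).2 fun _ => rfl, 1, one_ne_zero,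
    fun k => by simp⟩
  · calc _ ≤ ∏ j, m j / a j := card_rootBox_le _ _
      _ = _ := by rw [← Finset.prod_erase_mul _ _ (Finset.mem_univ i), hki, mul_one]
  · intro β hβi hβ
    obtain ⟨lam, hlam, γ, hγi, hβγ⟩ := exists_weighted_rescale_eq a (ha i) hβi hαi
    refine ⟨γ, (mem_rootBox hk).2 fun j => ?_, lam, hlam, hβγ⟩
    have hj := relation β hβ j
    rw [hβγ j, hβγ i, hγi] at hj
    exact pow_eq_pow_of_weighted_rescale hlam hαi ((hmj j).trans (hmi j).symm) hj
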